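/- On ℂⁿ (n ≥ 2) with standard complex structure J = i, let ∇ be the connection with only nonzero Christoffel symbols Γ²_{1̄1} = 1 and Γ^{2̄}_{11̄} = 1 (in complex index notation, all others including Γ²_{11̄} and Γ^{2̄}_{1̄1} vanishing). Then ∇ is a complex connection (∇J = 0), its curvature tensor vanishes identically, and its torsion equals T_∇ = dz¹ ∧ dz̄¹ ⊗ (∂_{z̄²} - ∂_{z²}), which is complex-antilinear in its first argument and complex-linear in its second argument (as a (2,1)-tensor on the underlying real manifold ℝ^{2n}). -/

import Mathlib

open Finset

noncomputable def pder17 {ι : Type*} [Fintype ι] [DecidableEq ι]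
    (i : ι) (f : (ι → ℝ) → ℝ) (p : ι → ℝ) : ℝ :=
  fderiv ℝ f p (Pi.single i 1)

/-- the standard complex structure on `ℝ^{2n} ≅ ℂⁿ`, coordinates `(k,0) ↦ x_{k+1}`,
`(k,1) ↦ y_{k+1}`. -/
def Jstd17 (n : ℕ) (i j : Fin n × Fin 2) : ℝ :=
  if i.1 = j.1 ∧ i.2 = 1 ∧ j.2 = 0 then 1
  else if i.1 = j.1 ∧ i.2 = 0 ∧ j.2 = 1 then -1 else 0

/-- the real Christoffel symbols of the connection on `ℂⁿ` with `Γ²_{1̄1} = 1`,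
`Γ^{2̄}_{11̄} = 1` and all other complex Christoffel symbols zero. -/
def Gam17 (n : ℕ) [NeZero n] (i j k : Fin n × Fin 2) : ℝ :=
  if i = ((1,0) : Fin n × Fin 2) ∧ j = ((0,0) : Fin n × Fin 2) ∧ k = ((0,0) : Fin n × Fin 2)
    then 1
  else if i = ((1,1) : Fin n × Fin 2) ∧ j = ((0,0) : Fin n × Fin 2) ∧ k = ((0,1) : Fin n × Fin 2)
    then 1
  else if i = ((1,1) : Fin n × Fin 2) ∧ j = ((0,1) : Fin n × Fin 2) ∧ k = ((0,0) : Fin n × Fin 2)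
    then -1
  else if i = ((1,0) : Fin n × Fin 2) ∧ j = ((0,1) : Fin n × Fin 2) ∧ k = ((0,1) : Fin n × Fin 2)
    then 1
  else 0

/-! In the real frame `(∂_{x_k}, ∂_{y_k})` the complex structure is `1 ⊗ₖ stdJ₂`, and the
connection matrix `Γ_j = (Γ^i_{jk})_{i,k}` vanishes unless `j` is a `z¹`-direction, where it is
`single 1 0 1 ⊗ₖ A` with `A ∈ {1, -stdJ₂}`: it maps the `z¹`-plane to the `z²`-plane by a complex
scalar. Hence every `Γ_j` commutes with `J` (so `∇J = 0`), and `Γ_k Γ_l = 0` because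
`single 1 0 1` squares to zero; as the symbols are constant, the curvature vanishes.
The torsion is `2 (dx¹ ∧ dy¹) ⊗ ∂_{y²}`, and `dx¹ ∧ dy¹` is `J`-invariant, which kills the
`(++)` and `(--)` parts. -/

open Matrix
open scoped Kronecker

def stdJ₂ : Matrix (Fin 2) (Fin 2) ℝ := !![0, -1; 1, 0]

def connBlock : Fin 2 → Matrix (Fin 2) (Fin 2) ℝ := ![1, -stdJ₂]

def christoffelMatrix (n : ℕ) [NeZero n] (j : Fin n × Fin 2) :
    Matrix (Fin n × Fin 2) (Fin n × Fin 2) ℝ :=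
  of fun i k => Gam17 n i j k

theorem Jstd17_eq_kronecker (n : ℕ) :
    Jstd17 n = ((1 : Matrix (Fin n) (Fin n) ℝ) ⊗ₖ stdJ₂ : Matrix _ _ ℝ) := by
  ext ⟨a, b⟩ ⟨c, d⟩
  fin_cases b <;> fin_cases d <;> by_cases h : a = c <;> simp [Jstd17, stdJ₂, one_apply, h]

theorem christoffelMatrix_eq_kronecker (n : ℕ) [NeZero n] (c : Fin n) (d : Fin 2) :
    christoffelMatrix n (c, d) = if c = 0 then single 1 0 1 ⊗ₖ connBlock d else 0 := by
  ext ⟨a, b⟩ ⟨e, f⟩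
  fin_cases b <;> fin_cases d <;> fin_cases f <;>
    by_cases hc : c = 0 <;> by_cases ha : a = 1 <;> by_cases he : e = 0 <;>
    simp [christoffelMatrix, Gam17, connBlock, stdJ₂, Prod.ext_iff, hc, ha, he, eq_comm]

theorem connBlock_commute_stdJ₂ (d : Fin 2) : Commute (connBlock d) stdJ₂ := by
  fin_cases d
  · exact Commute.one_left stdJ₂
  · exact (Commute.refl stdJ₂).neg_left

theorem christoffelMatrix_commute (n : ℕ) [NeZero n] (j : Fin n × Fin 2) :
    Commute (christoffelMatrix n j) (1 ⊗ₖ stdJ₂) := by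
  obtain ⟨c, d⟩ := j
  rw [christoffelMatrix_eq_kronecker]
  split_ifs
  · simp only [Commute, SemiconjBy, ← mul_kronecker_mul, mul_one, one_mul,
      (connBlock_commute_stdJ₂ d).eq]
  · exact Commute.zero_left _

theorem christoffelMatrix_mul_christoffelMatrix (n : ℕ) [NeZero n] (hn : 2 ≤ n)
    (j k : Fin n × Fin 2) : christoffelMatrix n j * christoffelMatrix n k = 0 := by
  have h01 : (0 : Fin n) ≠ 1 := by
    rw [Ne, Fin.ext_iff, Fin.val_zero, Fin.val_one', Nat.one_mod_eq_one.mpr (by omega)]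
    omega
  obtain ⟨c, d⟩ := j
  obtain ⟨e, f⟩ := k
  rw [christoffelMatrix_eq_kronecker, christoffelMatrix_eq_kronecker]
  split_ifs <;>
    simp [← mul_kronecker_mul, single_mul_single_of_ne (1 : ℝ) (1 : Fin n) 0 1 h01]

theorem sum_Gam17_mul_Jstd17 (n : ℕ) [NeZero n] (i j k : Fin n × Fin 2) :
    ∑ l, Gam17 n i j l * Jstd17 n l k = ∑ l, Jstd17 n i l * Gam17 n l j k := by
  rw [Jstd17_eq_kronecker]
  exact congrFun (congrFun (christoffelMatrix_commute n j).eq i) k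

theorem pder17_const {ι : Type*} [Fintype ι] [DecidableEq ι] (i : ι) (c : ℝ) (p : ι → ℝ) :
    pder17 i (fun _ => c) p = 0 := by
  simp [pder17]

theorem curvature_Gam17_eq_zero (n : ℕ) [NeZero n] (hn : 2 ≤ n) (i j k l : Fin n × Fin 2)
    (p : Fin n × Fin 2 → ℝ) :
    pder17 k (fun _ => Gam17 n i l j) p - pder17 l (fun _ => Gam17 n i k j) p
      + ∑ s, (Gam17 n i k s * Gam17 n s l j - Gam17 n i l s * Gam17 n s k j) = 0 := by
  have hkl : ∑ s, Gam17 n i k s * Gam17 n s l j = 0 :=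
    congrFun (congrFun (christoffelMatrix_mul_christoffelMatrix n hn k l) i) j
  have hlk : ∑ s, Gam17 n i l s * Gam17 n s k j = 0 :=
    congrFun (congrFun (christoffelMatrix_mul_christoffelMatrix n hn l k) i) j
  rw [pder17_const, pder17_const, Finset.sum_sub_distrib, hkl, hlk]
  norm_num

theorem Gam17_sub_Gam17_swap (n : ℕ) [NeZero n] (i j k : Fin n × Fin 2) :
    Gam17 n i j k - Gam17 n i k j =
      if i = ((1,1) : Fin n × Fin 2) ∧ j = ((0,0) : Fin n × Fin 2) ∧ k = ((0,1) : Fin n × Fin 2)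
        then 2
      else if i = ((1,1) : Fin n × Fin 2) ∧ j = ((0,1) : Fin n × Fin 2) ∧ k = ((0,0) : Fin n × Fin 2)
        then -2
      else 0 := by
  obtain ⟨a, b⟩ := i; obtain ⟨c, d⟩ := j; obtain ⟨e, f⟩ := k
  fin_cases b <;> fin_cases d <;> fin_cases f <;>
    simp [Gam17, Prod.ext_iff] <;> split_ifs <;> simp_all <;> norm_num

def torsionMap (n : ℕ) [NeZero n] (u v : Fin n × Fin 2 → ℝ) : Fin n × Fin 2 → ℝ :=
  fun i => ∑ j, ∑ k, (Gam17 n i j k - Gam17 n i k j) * u j * v k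

theorem torsionMap_eq (n : ℕ) [NeZero n] (u v : Fin n × Fin 2 → ℝ) :
    torsionMap n u v = Pi.single (1, 1) (2 * (u (0, 0) * v (0, 1) - u (0, 1) * v (0, 0))) := by
  ext i
  by_cases hi : i = (1, 1)
  · subst hi
    simp only [torsionMap, Gam17_sub_Gam17_swap, true_and]
    rw [← Fintype.sum_prod_type', Fintype.sum_eq_add ((0, 0), (0, 1)) ((0, 1), (0, 0))]
    · simp
      ring
    · simp [Prod.ext_iff]
    · rintro ⟨j, k⟩ ⟨h1, h2⟩
      rw [Ne, Prod.mk.injEq] at h1 h2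
      simp [h1, h2]
  · simp [torsionMap, Gam17_sub_Gam17_swap, hi]

theorem Jstd17_mulVec_apply_zero (n : ℕ) (w : Fin n × Fin 2 → ℝ) (a : Fin n) :
    (Jstd17 n *ᵥ w) (a, 0) = -w (a, 1) := by
  simp [mulVec, dotProduct, Fintype.sum_prod_type, Jstd17, Fin.sum_univ_two]

theorem Jstd17_mulVec_apply_one (n : ℕ) (w : Fin n × Fin 2 → ℝ) (a : Fin n) :
    (Jstd17 n *ᵥ w) (a, 1) = w (a, 0) := by
  simp [mulVec, dotProduct, Fintype.sum_prod_type, Jstd17, Fin.sum_univ_two]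

theorem torsionMap_Jstd17_Jstd17 (n : ℕ) [NeZero n] (u v : Fin n × Fin 2 → ℝ) :
    torsionMap n (Jstd17 n *ᵥ u) (Jstd17 n *ᵥ v) = torsionMap n u v := by
  simp only [torsionMap_eq, Jstd17_mulVec_apply_zero, Jstd17_mulVec_apply_one]
  ring_nf

theorem torsionMap_Jstd17_right (n : ℕ) [NeZero n] (u v : Fin n × Fin 2 → ℝ) :
    torsionMap n u (Jstd17 n *ᵥ v) = -torsionMap n (Jstd17 n *ᵥ u) v := by
  simp only [torsionMap_eq, Jstd17_mulVec_apply_zero, Jstd17_mulVec_apply_one, ← Pi.single_neg]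
  ring_nf

theorem pureTypeParts_eq_zero {V : Type*} [AddCommGroup V] {J : V → V} {T : V → V → V}
    (hJ_neg : ∀ x, J (-x) = -J x) (hT_J_J : ∀ u v, T (J u) (J v) = T u v)
    (hT_J_right : ∀ u v, T u (J v) = -T (J u) v) (u v : V) :
    T u v - J (T (J u) v) - J (T u (J v)) - T (J u) (J v) = 0 ∧
      T u v + J (T (J u) v) + J (T u (J v)) - T (J u) (J v) = 0 := by
  rw [hT_J_right, hJ_neg, hT_J_J]
  constructor <;> abel

/-- the connection with `Γ²_{1̄1} = Γ^{2̄}_{11̄} = 1` on `ℂⁿ` (`n ≥ 2`) is a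
complex connection, is flat (vanishing curvature), and its torsion equals
`dz¹ ∧ dz̄¹ ⊗ (∂_{z̄²} - ∂_{z²})` (`= 2 dx₁∧dy₁ ⊗ ∂_{y₂}` in real coordinates), which is of
pure mixed (antilinear,linear) type: its `(++)` and `(--)` components vanish. -/
theorem submaximal_cprojective_stmt17 (n : ℕ) (hn : 2 ≤ n) :
    haveI : NeZero n := ⟨by omega⟩
    -- ∇J = 0 (complex connection), at the level of the (constant) Christoffel symbols:
    (∀ i j k : Fin n × Fin 2,
      ∑ l, Gam17 n i j l * Jstd17 n l k = ∑ l, Jstd17 n i l * Gam17 n l j k) ∧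
    -- the curvature R^i_{jkl} = ∂_k Γ^i_{lj} - ∂_l Γ^i_{kj} + Γ^i_{ks}Γ^s_{lj} - Γ^i_{ls}Γ^s_{kj}
    -- vanishes identically:
    (∀ (i j k l : Fin n × Fin 2) (p : Fin n × Fin 2 → ℝ),
      pder17 k (fun _ => Gam17 n i l j) p - pder17 l (fun _ => Gam17 n i k j) p
        + ∑ s, (Gam17 n i k s * Gam17 n s l j - Gam17 n i l s * Gam17 n s k j) = 0) ∧
    -- the torsion T^i_{jk} = Γ^i_{jk} - Γ^i_{kj} equals 2 dx₁∧dy₁ ⊗ ∂_{y₂},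
    -- the real form of dz¹ ∧ dz̄¹ ⊗ (∂_{z̄²} - ∂_{z²}):
    (∀ i j k : Fin n × Fin 2, Gam17 n i j k - Gam17 n i k j =
      if i = ((1,1) : Fin n × Fin 2) ∧ j = ((0,0) : Fin n × Fin 2) ∧ k = ((0,1) : Fin n × Fin 2)
        then 2
      else if i = ((1,1) : Fin n × Fin 2) ∧ j = ((0,1) : Fin n × Fin 2) ∧ k = ((0,0) : Fin n × Fin 2)
        then -2
      else 0) ∧
    -- the torsion is of mixed (antilinear, linear) type: with
    -- T(u,v)ⁱ = Σ (Γ^i_{jk}-Γ^i_{kj}) uʲ vᵏ and (Ju)ⁱ = Σ Jⁱ_l uˡ, both the (++) part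
    -- T(u,v) - J T(Ju,v) - J T(u,Jv) - T(Ju,Jv) and the (--) part
    -- T(u,v) + J T(Ju,v) + J T(u,Jv) - T(Ju,Jv) vanish:
    (∀ (T : (Fin n × Fin 2 → ℝ) → (Fin n × Fin 2 → ℝ) → (Fin n × Fin 2 → ℝ))
       (Jv : (Fin n × Fin 2 → ℝ) → (Fin n × Fin 2 → ℝ)),
      (∀ u v i, T u v i = ∑ j, ∑ k, (Gam17 n i j k - Gam17 n i k j) * u j * v k) →
      (∀ u i, Jv u i = ∑ l, Jstd17 n i l * u l) →
      ∀ u v, (T u v - Jv (T (Jv u) v) - Jv (T u (Jv v)) - T (Jv u) (Jv v) = 0 ∧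
              T u v + Jv (T (Jv u) v) + Jv (T u (Jv v)) - T (Jv u) (Jv v) = 0)) := by
  have : NeZero n := ⟨by omega⟩
  refine ⟨sum_Gam17_mul_Jstd17 n, curvature_Gam17_eq_zero n hn, Gam17_sub_Gam17_swap n, ?_⟩
  intro T Jv hT hJ
  obtain rfl : T = torsionMap n := funext fun u => funext fun v => funext (hT u v)
  obtain rfl : Jv = (Jstd17 n *ᵥ ·) := funext fun u => funext (hJ u)
  exact pureTypeParts_eq_zero (fun x => mulVec_neg _ _) (torsionMap_Jstd17_Jstd17 n)
    (torsionMap_Jstd17_right n)
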